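/- For the QKD distribution P, conditioned on Alice and Bob choosing different polarisation schemes, Bob's measurement is independent of Alice's bit: P({ω : AsOne ω = BmOne ω} | {ω : AchX ω ≠ BchX ω}) = 1/2. -/
import Mathlib


def AsOne (ω : Bool × Bool × Bool × Bool) : Bool := ω.1
def AchX (ω : Bool × Bool × Bool × Bool) : Bool := ω.2.1
def BchX (ω : Bool × Bool × Bool × Bool) : Bool := ω.2.2.1
def BmOne (ω : Bool × Bool × Bool × Bool) : Bool := ω.2.2.2

noncomputable def ops (ω : Bool × Bool × Bool × Bool) : ℝ :=
  if AchX ω = BchX ω then (if AsOne ω = BmOne ω then 1/8 else 0) else 1/16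

noncomputable def Pq (A : Set (Bool × Bool × Bool × Bool)) : ℝ :=
  ∑ ω ∈ (Set.toFinite A).toFinset, ops ω

lemma Pq_eq (A : Set (Bool × Bool × Bool × Bool)) [DecidablePred (· ∈ A)] :
    Pq A = ∑ ω : Bool × Bool × Bool × Bool, if ω ∈ A then ops ω else 0 := by
  rw [Pq, ← Finset.sum_filter]
  apply Finset.sum_congr _ (fun _ _ => rfl)
  ext ω; simp [Set.Finite.mem_toFinset]

theorem qkd_diff_scheme_half :
    Pq ({ω | AsOne ω = BmOne ω} ∩ {ω | AchX ω ≠ BchX ω}) /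
      Pq {ω | AchX ω ≠ BchX ω} = 1/2 := by
  classical
  rw [Pq_eq, Pq_eq]
  simp only [Set.mem_inter_iff, Set.mem_setOf_eq, ops, AsOne, AchX, BchX, BmOne,
    Fintype.sum_prod_type, Fintype.sum_bool]
  norm_num
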